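/- Let Φ : ℝ^d → ℝ^m be a feature map, ψ a probability distribution on ℝ^d, and f : ℝ^d → ℝ, with f and each component of Φ square-integrable under ψ. Let X_1, …, X_n be i.i.d. samples from ψ and let ξ be a random vector in ℝ^m, independent of (X_1,…,X_n), with independent components each of mean zero and variance σ_ξ². Then for every a ∈ ℝ^m, E[ ( (1/n)∑_{i=1}^n f(X_i) − ⟨a, (1/n)(∑_{i=1}^n Φ(X_i) + ξ)⟩ )² ] = ((n−1)/n) · ( E_{X∼ψ}[f(X)] − ⟨a, E_{X∼ψ}[Φ(X)]⟩ )² + (1/n) · E_{X∼ψ}[ ( f(X) − ⟨a, Φ(X)⟩ )² ] + (σ_ξ²/n²) ‖a‖₂². -/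

import Mathlib

/-!
Write `g = f - ⟨a, Φ⟩`, `S = ∑ᵢ g(Xᵢ)` and `T = ⟨a, ξ⟩`, so that the sketch error is
`(S - T) / n`. Being a function of the sample, `S` is independent of `T`, and `T` is centred, so
`E[(S - T)²] = Var S + Var T + (E S)²`. Independence within the sample and within the noise gives
`Var S = n Var_ψ g`, `Var T = σξ² ‖a‖²` and `E S = n E_ψ g`; substituting
`Var_ψ g = E_ψ[g²] - (E_ψ g)²` produces the squared-bias, variance and noise terms.
-/

open MeasureTheory ProbabilityTheory

lemma mul_sum_sub_sum_mul_mul_sum_add {R ι κ : Type*} [CommRing R] [Fintype ι] [Fintype κ]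
    (c : R) (F : ι → R) (P : ι → κ → R) (z a : κ → R) :
    c * ∑ i, F i - ∑ j, a j * (c * (∑ i, P i j + z j))
      = c * (∑ i, (F i - ∑ j, a j * P i j) - ∑ j, a j * z j) := by
  simp only [Finset.sum_sub_distrib, Finset.mul_sum, mul_add, Finset.sum_add_distrib, mul_sub]
  rw [Finset.sum_comm (f := fun i j => c * (a j * P i j))]
  simp only [mul_left_comm c, sub_sub]

lemma MeasureTheory.integral_sum_const_mul {α ι : Type*} [MeasurableSpace α] {μ : Measure α}
    [Fintype ι] {F : ι → α → ℝ} (hF : ∀ j, Integrable (F j) μ) (a : ι → ℝ) :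
    ∫ x, ∑ j, a j * F j x ∂μ = ∑ j, a j * ∫ x, F j x ∂μ := by
  rw [integral_finsetSum _ fun j _ => (hF j).const_mul (a j)]
  simp only [integral_const_mul]

lemma MeasureTheory.MeasurePreserving.integral_comp_of_aestronglyMeasurable
    {α β G : Type*} [MeasurableSpace α] [MeasurableSpace β] [NormedAddCommGroup G]
    [NormedSpace ℝ G] {μ : Measure α} {ν : Measure β} {f : α → β}
    (hf : MeasurePreserving f μ ν) {g : β → G} (hg : AEStronglyMeasurable g ν) :
    ∫ x, g (f x) ∂μ = ∫ y, g y ∂ν := by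
  rw [← hf.map_eq] at hg ⊢
  exact (integral_map hf.aemeasurable hg).symm

namespace ProbabilityTheory

variable {Ω : Type*} [MeasurableSpace Ω] {μ : Measure Ω}

lemma integral_sq_eq_variance_add_sq [IsProbabilityMeasure μ] {U : Ω → ℝ} (hU : MemLp U 2 μ) :
    ∫ ω, U ω ^ 2 ∂μ = Var[U; μ] + (∫ ω, U ω ∂μ) ^ 2 := by
  rw [variance_eq_sub hU]
  simp only [Pi.pow_apply]
  ring

lemma IndepFun.integral_sub_sq [IsProbabilityMeasure μ] {U V : Ω → ℝ} (hU : MemLp U 2 μ)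
    (hV : MemLp V 2 μ) (hUV : IndepFun U V μ) :
    ∫ ω, (U ω - V ω) ^ 2 ∂μ
      = Var[U; μ] + Var[V; μ] + (∫ ω, U ω ∂μ - ∫ ω, V ω ∂μ) ^ 2 := by
  have hUnegV : IndepFun U (-V) μ := hUV.comp measurable_id measurable_neg
  have hmoment := integral_sq_eq_variance_add_sq (hU.sub hV)
  simp only [Pi.sub_apply] at hmoment
  rw [hmoment, integral_sub (hU.integrable one_le_two) (hV.integrable one_le_two),
    sub_eq_add_neg U V, hUnegV.variance_add hU hV.neg, variance_neg]

variable {ι : Type*} [Fintype ι]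

lemma iIndepFun.variance_sum_const_mul {ξ : ι → Ω → ℝ} (hindep : iIndepFun ξ μ)
    (hξ : ∀ j, MemLp (ξ j) 2 μ) (a : ι → ℝ) :
    Var[fun ω => ∑ j, a j * ξ j ω; μ] = ∑ j, a j ^ 2 * Var[ξ j; μ] := by
  have hpair : Set.Pairwise (Finset.univ : Finset ι) fun j k =>
      IndepFun (fun ω => a j * ξ j ω) (fun ω => a k * ξ k ω) μ := fun j _ k _ hjk =>
    (hindep.indepFun hjk).comp (measurable_const_mul (a j)) (measurable_const_mul (a k))
  rw [← Finset.sum_fn, IndepFun.variance_sum (fun j _ => (hξ j).const_mul (a j)) hpair]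
  simp only [variance_const_mul]

variable {E : Type*} [MeasurableSpace E] {ψ : Measure E} {X : ι → Ω → E} {g : E → ℝ}

lemma integral_sum_comp_of_measurePreserving (hX : ∀ i, MeasurePreserving (X i) μ ψ)
    (hg : Integrable g ψ) :
    ∫ ω, ∑ i, g (X i ω) ∂μ = Fintype.card ι * ∫ x, g x ∂ψ := by
  rw [integral_finsetSum (f := fun i ω => g (X i ω)) _ fun i _ =>
    (hX i).integrable_comp_of_integrable hg]
  simp [(hX _).integral_comp_of_aestronglyMeasurable hg.aestronglyMeasurable]

lemma iIndepFun.variance_sum_comp (hX : ∀ i, MeasurePreserving (X i) μ ψ)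
    (hindep : iIndepFun X μ) (hg : MemLp g 2 ψ) :
    Var[fun ω => ∑ i, g (X i ω); μ] = Fintype.card ι * Var[g; ψ] := by
  have hpair : Set.Pairwise (Finset.univ : Finset ι) fun i j =>
      IndepFun (fun ω => g (X i ω)) (fun ω => g (X j ω)) μ := fun i _ j _ hij =>
    (hindep.comp₀ (fun _ => g) (fun i => (hX i).aemeasurable)
      (fun i => (hX i).map_eq ▸ hg.aemeasurable)).indepFun hij
  rw [← Finset.sum_fn, IndepFun.variance_sum (X := fun i ω => g (X i ω))
    (fun i _ => hg.comp_measurePreserving (hX i)) hpair]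
  simp [(hX _).variance_fun_comp hg.aemeasurable]

lemma iIndepFun.indepFun_sum_comp {β : Type*} [MeasurableSpace β] {Y : Ω → β}
    [IsProbabilityMeasure ψ] (hX : ∀ i, MeasurePreserving (X i) μ ψ) (hindep : iIndepFun X μ)
    (hXY : IndepFun (fun ω i => X i ω) Y μ) (hg : AEMeasurable g ψ) :
    IndepFun (fun ω => ∑ i, g (X i ω)) Y μ := by
  have hlaw : μ.map (fun ω i => X i ω) = Measure.pi fun _ => ψ := by
    rw [hindep.map_fun_eq_pi_map fun i => (hX i).aemeasurable]
    simp only [(hX _).map_eq]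
  have hsum : AEMeasurable (fun v : ι → E => ∑ i, g (v i)) (Measure.pi fun _ => ψ) :=
    Finset.aemeasurable_fun_sum _ fun i _ =>
      hg.comp_quasiMeasurePreserving (measurePreserving_eval _ i).quasiMeasurePreserving
  -- `g` is only a.e. measurable: replace the sum by a measurable version, a.e. under the law
  -- `Measure.pi ψ` of the sample.
  rw [← hlaw] at hsum
  refine (hXY.comp hsum.measurable_mk measurable_id).congr ?_ .rfl
  exact ae_eq_comp (aemeasurable_pi_lambda _ fun i => (hX i).aemeasurable) hsum.ae_eq_mk.symm

end ProbabilityTheory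

theorem m2m_mse_decomposition_general
    {Ω : Type*} [MeasurableSpace Ω] (μ : Measure Ω) [IsProbabilityMeasure μ]
    (d m n : ℕ)
    (ψ : Measure (Fin d → ℝ)) [IsProbabilityMeasure ψ]
    (Φ : (Fin d → ℝ) → Fin m → ℝ) (f : (Fin d → ℝ) → ℝ)
    (hf : MemLp f 2 ψ) (hΦ : ∀ j, MemLp (fun x => Φ x j) 2 ψ)
    (X : Fin n → Ω → Fin d → ℝ)
    (hXmeas : ∀ i, Measurable (X i))
    (hXindep : iIndepFun X μ)
    (hXdist : ∀ i, Measure.map (X i) μ = ψ)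
    (ξ : Ω → Fin m → ℝ)
    (σξ : ℝ)
    (hXξindep : IndepFun (fun ω i => X i ω) ξ μ)
    (hξindep : iIndepFun (fun j ω => ξ ω j) μ)
    (hξL2 : ∀ j, MemLp (fun ω => ξ ω j) 2 μ)
    (hξmean : ∀ j, ∫ ω, ξ ω j ∂μ = 0)
    (hξvar : ∀ j, ∫ ω, (ξ ω j) ^ 2 ∂μ = σξ ^ 2)
    (a : Fin m → ℝ) :
    ∫ ω, ((1 / (n : ℝ)) * ∑ i, f (X i ω)
        - ∑ j, a j * ((1 / (n : ℝ)) * (∑ i, Φ (X i ω) j + ξ ω j))) ^ 2 ∂μ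
      = (((n : ℝ) - 1) / (n : ℝ))
            * ((∫ x, f x ∂ψ) - ∑ j, a j * ∫ x, Φ x j ∂ψ) ^ 2
        + (1 / (n : ℝ)) * ∫ x, (f x - ∑ j, a j * Φ x j) ^ 2 ∂ψ
        + (σξ ^ 2 / (n : ℝ) ^ 2) * ∑ j, (a j) ^ 2 := by
  set g : (Fin d → ℝ) → ℝ := fun x => f x - ∑ j, a j * Φ x j
  have haΦ : MemLp (fun x => ∑ j, a j * Φ x j) 2 ψ :=
    memLp_finsetSum _ fun j _ => (hΦ j).const_mul (a j)
  have hg : MemLp g 2 ψ := hf.sub haΦ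
  have hX : ∀ i, MeasurePreserving (X i) μ ψ := fun i => ⟨hXmeas i, hXdist i⟩
  set S := fun ω => ∑ i, g (X i ω)
  set T := fun ω => ∑ j, a j * ξ ω j
  have hS : MemLp S 2 μ := memLp_finsetSum _ fun i _ => hg.comp_measurePreserving (hX i)
  have hT : MemLp T 2 μ := memLp_finsetSum _ fun j _ => (hξL2 j).const_mul (a j)
  have hST : IndepFun S T μ :=
    (hXindep.indepFun_sum_comp hX hXξindep hg.aemeasurable).comp
      (ψ := fun v : Fin m → ℝ => ∑ j, a j * v j) measurable_id (by fun_prop)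
  have hT0 : ∫ ω, T ω ∂μ = 0 := by
    simp [T, integral_sum_const_mul (fun j => (hξL2 j).integrable one_le_two), hξmean]
  have hξvariance : ∀ j, Var[fun ω => ξ ω j; μ] = σξ ^ 2 := fun j =>
    (variance_of_integral_eq_zero (hξL2 j).aemeasurable (hξmean j)).trans (hξvar j)
  have hgmean : ∫ x, g x ∂ψ = ∫ x, f x ∂ψ - ∑ j, a j * ∫ x, Φ x j ∂ψ := by
    rw [integral_sub (hf.integrable one_le_two) (haΦ.integrable one_le_two),
      integral_sum_const_mul fun j => (hΦ j).integrable one_le_two]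
  have hgsq : ∫ x, (f x - ∑ j, a j * Φ x j) ^ 2 ∂ψ = Var[g; ψ] + (∫ x, g x ∂ψ) ^ 2 :=
    integral_sq_eq_variance_add_sq hg
  have herror : ∀ ω, (1 / (n : ℝ)) * ∑ i, f (X i ω)
      - ∑ j, a j * ((1 / (n : ℝ)) * (∑ i, Φ (X i ω) j + ξ ω j))
        = (1 / (n : ℝ)) * (S ω - T ω) := fun ω =>
    mul_sum_sub_sum_mul_mul_sum_add _ _ (fun i j => Φ (X i ω) j) (ξ ω) a
  simp_rw [herror, mul_pow]
  rw [integral_const_mul, hST.integral_sub_sq hS hT, hT0, hXindep.variance_sum_comp hX hg,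
    hξindep.variance_sum_const_mul hξL2,
    integral_sum_comp_of_measurePreserving hX (hg.integrable one_le_two), hgsq, ← hgmean]
  simp only [hξvariance, Fintype.card_fin, ← Finset.sum_mul]
  -- for `n = 0` both sides vanish, since `1 / 0 = 0` in `ℝ`
  rcases eq_or_ne (n : ℝ) 0 with hn | hn
  · simp [hn]
  · field_simp
    ring

/-- **Exact decomposition of the M2M mean squared error.** For i.i.d. samples
`X_1, …, X_n ∼ ψ` and noise `ξ` independent of the samples, with independent centered
components of variance `σξ²`, the mean squared error of the linear sketch-based
estimate of the empirical mean of `f` decomposes exactly into a squared-bias term,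
a variance term and a noise term:
`E[((1/n)∑ᵢ f(Xᵢ) - ⟨a, (1/n)(∑ᵢ Φ(Xᵢ) + ξ)⟩)²]
  = ((n-1)/n)(E_ψ[f] - ⟨a, E_ψ[Φ]⟩)² + (1/n) E_ψ[(f - ⟨a, Φ⟩)²] + (σξ²/n²)‖a‖₂²`. -/
theorem m2m_mse_decomposition
    {Ω : Type*} [MeasurableSpace Ω] (μ : Measure Ω) [IsProbabilityMeasure μ]
    (d m n : ℕ) (hn : 0 < n)
    (ψ : Measure (Fin d → ℝ)) [IsProbabilityMeasure ψ]
    (Φ : (Fin d → ℝ) → Fin m → ℝ) (f : (Fin d → ℝ) → ℝ)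
    (hf : MemLp f 2 ψ) (hΦ : ∀ j, MemLp (fun x => Φ x j) 2 ψ)
    (X : Fin n → Ω → Fin d → ℝ)
    (hXmeas : ∀ i, Measurable (X i))
    (hXindep : iIndepFun X μ)
    (hXdist : ∀ i, Measure.map (X i) μ = ψ)
    (ξ : Ω → Fin m → ℝ) (hξmeas : Measurable ξ)
    (σξ : ℝ)
    (hXξindep : IndepFun (fun ω i => X i ω) ξ μ)
    (hξindep : iIndepFun (fun j ω => ξ ω j) μ)
    (hξL2 : ∀ j, MemLp (fun ω => ξ ω j) 2 μ)
    (hξmean : ∀ j, ∫ ω, ξ ω j ∂μ = 0)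
    (hξvar : ∀ j, ∫ ω, (ξ ω j) ^ 2 ∂μ = σξ ^ 2)
    (a : Fin m → ℝ) :
    ∫ ω, ((1 / (n : ℝ)) * ∑ i, f (X i ω)
        - ∑ j, a j * ((1 / (n : ℝ)) * (∑ i, Φ (X i ω) j + ξ ω j))) ^ 2 ∂μ
      = (((n : ℝ) - 1) / (n : ℝ))
            * ((∫ x, f x ∂ψ) - ∑ j, a j * ∫ x, Φ x j ∂ψ) ^ 2
        + (1 / (n : ℝ)) * ∫ x, (f x - ∑ j, a j * Φ x j) ^ 2 ∂ψ
        + (σξ ^ 2 / (n : ℝ) ^ 2) * ∑ j, (a j) ^ 2 :=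
  m2m_mse_decomposition_general μ d m n ψ Φ f hf hΦ X hXmeas hXindep hXdist ξ σξ hXξindep hξindep
    hξL2 hξmean hξvar a
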